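/- arXiv:2111.06685 — 2 statements merged into one kernel-verified Lean document; each statement's English description precedes it below -/
import Mathlib

section
/- Let v ∈ ℝ^D be nonzero, R a D×D matrix with ‖R‖_op ≤ λ < 1, and x̂ = v + ReLU(R v). Then for every nonzero unit vector μ ∈ ℝ^D, the cosine similarities satisfy |C(x̂, μ) − C(v, μ)| ≤ 2λ/(1 − λ), where C(a,b) = ⟨a,b⟩/(‖a‖₂‖b‖₂). -/
open RealInnerProductSpace

noncomputable def relu {D : ℕ} (u : EuclideanSpace ℝ (Fin D)) : EuclideanSpace ℝ (Fin D) :=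
  WithLp.toLp 2 (fun j => max (u j) 0)

noncomputable def cosSim {D : ℕ} (a b : EuclideanSpace ℝ (Fin D)) : ℝ :=
  ⟪a, b⟫ / (‖a‖ * ‖b‖)

/-!
Both cosine similarities are inner products of `μ / ‖μ‖` with the normalized vectors, so their
difference is at most `‖x̂/‖x̂‖ - v/‖v‖‖ ≤ 2‖x̂ - v‖/‖x̂‖`. Since ReLU does not increase the
Euclidean norm, `‖x̂ - v‖ = ‖ReLU (R v)‖ ≤ λ‖v‖`, and hence `‖x̂‖ ≥ (1 - λ)‖v‖`.
-/

lemma norm_relu_le {D : ℕ} (u : EuclideanSpace ℝ (Fin D)) : ‖relu u‖ ≤ ‖u‖ := by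
  simp only [EuclideanSpace.norm_eq, relu, Real.norm_eq_abs, sq_abs]
  refine Real.sqrt_le_sqrt (Finset.sum_le_sum fun i _ => ?_)
  exact sq_le_sq.mpr (by simpa using abs_max_le_max_abs_abs (a := u i) (b := 0))

section Normalize

open NormedSpace (normalize)

variable {V : Type*} [NormedAddCommGroup V] [NormedSpace ℝ V]

lemma NormedSpace.norm_normalize_le (x : V) : ‖normalize x‖ ≤ 1 := by
  by_cases hx : x = 0
  · simp [hx]
  · exact (norm_normalize hx).le

lemma NormedSpace.norm_normalize_sub_normalize_le {x : V} (hx : x ≠ 0) (y : V) :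
    ‖normalize x - normalize y‖ ≤ 2 * ‖x - y‖ / ‖x‖ := by
  have hsplit : normalize x - normalize y =
      ‖x‖⁻¹ • ((x - y) + (‖y‖ - ‖x‖) • normalize y) := by
    have hy : y = ‖y‖ • normalize y := (norm_smul_normalize y).symm
    generalize ‖y‖ = r, normalize y = n at hy
    subst hy
    simp only [normalize]
    match_scalars
    · field_simp
    · field_simp; ring
  calc ‖normalize x - normalize y‖
      ≤ ‖x‖⁻¹ * (‖x - y‖ + |‖y‖ - ‖x‖| * ‖normalize y‖) := by
        rw [hsplit, norm_smul, norm_inv, norm_norm, ← Real.norm_eq_abs, ← norm_smul]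
        gcongr
        exact norm_add_le _ _
    _ ≤ ‖x‖⁻¹ * (‖x - y‖ + ‖x - y‖ * 1) := by
        gcongr
        · exact (abs_norm_sub_norm_le y x).trans_eq (norm_sub_rev y x)
        · exact norm_normalize_le y
    _ = 2 * ‖x - y‖ / ‖x‖ := by ring

end Normalize

lemma cosSim_eq_inner_normalize {D : ℕ} (a b : EuclideanSpace ℝ (Fin D)) :
    cosSim a b = ⟪NormedSpace.normalize a, NormedSpace.normalize b⟫ := by
  simp only [cosSim, NormedSpace.normalize, real_inner_smul_left, real_inner_smul_right]
  ring

lemma abs_cosSim_sub_cosSim_le {D : ℕ} (a b c : EuclideanSpace ℝ (Fin D)) :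
    |cosSim a c - cosSim b c| ≤ ‖NormedSpace.normalize a - NormedSpace.normalize b‖ := by
  rw [cosSim_eq_inner_normalize, cosSim_eq_inner_normalize, ← inner_sub_left]
  exact (abs_real_inner_le_norm _ _).trans
    (mul_le_of_le_one_right (norm_nonneg _) (NormedSpace.norm_normalize_le c))

lemma norm_relu_apply_le {D : ℕ} {R : EuclideanSpace ℝ (Fin D) →L[ℝ] EuclideanSpace ℝ (Fin D)}
    {lam : ℝ} (hR : ‖R‖ ≤ lam) (v : EuclideanSpace ℝ (Fin D)) :
    ‖relu (R v)‖ ≤ lam * ‖v‖ :=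
  (norm_relu_le _).trans (R.le_of_opNorm_le hR v)

lemma norm_add_relu_apply_ge {D : ℕ} {R : EuclideanSpace ℝ (Fin D) →L[ℝ] EuclideanSpace ℝ (Fin D)}
    {lam : ℝ} (hR : ‖R‖ ≤ lam) (v : EuclideanSpace ℝ (Fin D)) :
    (1 - lam) * ‖v‖ ≤ ‖v + relu (R v)‖ := by
  linarith [norm_sub_le_norm_add v (relu (R v)), norm_relu_apply_le hR v]

theorem cosSim_residual_perturb_general {D : ℕ} (v : EuclideanSpace ℝ (Fin D)) (hv : v ≠ 0)
    (R : EuclideanSpace ℝ (Fin D) →L[ℝ] EuclideanSpace ℝ (Fin D))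
    (lam : ℝ) (hR : ‖R‖ ≤ lam) (hlam : lam < 1)
    (mu : EuclideanSpace ℝ (Fin D)) :
    |cosSim (v + relu (R v)) mu - cosSim v mu| ≤ 2 * lam / (1 - lam) := by
  have hv_pos : 0 < ‖v‖ := norm_pos_iff.mpr hv
  have hlam0 : 0 ≤ lam := (norm_nonneg R).trans hR
  have hden : 0 < (1 - lam) * ‖v‖ := mul_pos (sub_pos.mpr hlam) hv_pos
  have hx_ne : v + relu (R v) ≠ 0 :=
    norm_pos_iff.mp (hden.trans_le (norm_add_relu_apply_ge hR v))
  calc |cosSim (v + relu (R v)) mu - cosSim v mu|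
      ≤ ‖NormedSpace.normalize (v + relu (R v)) - NormedSpace.normalize v‖ :=
        abs_cosSim_sub_cosSim_le _ _ _
    _ ≤ 2 * ‖relu (R v)‖ / ‖v + relu (R v)‖ := by
        simpa using NormedSpace.norm_normalize_sub_normalize_le hx_ne v
    _ ≤ 2 * (lam * ‖v‖) / ((1 - lam) * ‖v‖) := by
        gcongr
        · exact norm_relu_apply_le hR v
        · exact norm_add_relu_apply_ge hR v
    _ = 2 * lam / (1 - lam) := by
        rw [← mul_assoc, mul_div_mul_right _ _ hv_pos.ne']

theorem cosSim_residual_perturb {D : ℕ} (v : EuclideanSpace ℝ (Fin D)) (hv : v ≠ 0)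
    (R : EuclideanSpace ℝ (Fin D) →L[ℝ] EuclideanSpace ℝ (Fin D))
    (lam : ℝ) (hR : ‖R‖ ≤ lam) (hlam : lam < 1)
    (mu : EuclideanSpace ℝ (Fin D)) (hmu : mu ≠ 0) (hmu1 : ‖mu‖ = 1) :
    |cosSim (v + relu (R v)) mu - cosSim v mu| ≤ 2 * lam / (1 - lam) :=
  cosSim_residual_perturb_general v hv R lam hR hlam mu
end

section
/- Let R be a D×D real matrix with spectral norm at most λ. Then for any v ∈ ℝ^D, ⟨v, v + ReLU(R v)⟩ ≥ (1 − λ)‖v‖₂², and hence if λ < 1 and v ≠ 0, the cosine similarity between v and x̂ = v + ReLU(R v) satisfies C(v, x̂) ≥ (1 − λ)/(1 + λ). -/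
/-! Since ReLU is a contraction coordinatewise, `w := ReLU (R v)` satisfies `‖w‖ ≤ λ ‖v‖`.
For any such perturbation, Cauchy–Schwarz gives `⟪v, v + w⟫ ≥ ‖v‖² - ‖v‖ ‖w‖ ≥ (1 - λ) ‖v‖²`,
while the triangle inequality gives `‖v + w‖ ≤ (1 + λ) ‖v‖`; dividing the first bound by
`‖v‖ ‖v + w‖` yields the cosine bound. -/

open RealInnerProductSpace

section Perturbation

variable {E : Type*} [NormedAddCommGroup E] [InnerProductSpace ℝ E] {v w : E} {lam : ℝ}

lemma mul_norm_sq_le_inner_add_of_norm_le (hw : ‖w‖ ≤ lam * ‖v‖) :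
    (1 - lam) * ‖v‖ ^ 2 ≤ ⟪v, v + w⟫ := by
  have hcs : -(‖v‖ * ‖w‖) ≤ ⟪v, w⟫ := neg_le_of_abs_le (abs_real_inner_le_norm v w)
  have hvw : ‖v‖ * ‖w‖ ≤ lam * ‖v‖ ^ 2 := by
    nlinarith [mul_le_mul_of_nonneg_left hw (norm_nonneg v)]
  rw [inner_add_right, real_inner_self_eq_norm_sq]
  linarith

lemma div_le_inner_div_norm_mul_norm_add (hlam : lam < 1) (hv : v ≠ 0)
    (hw : ‖w‖ ≤ lam * ‖v‖) :
    (1 - lam) / (1 + lam) ≤ ⟪v, v + w⟫ / (‖v‖ * ‖v + w‖) := by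
  have hv₀ : 0 < ‖v‖ := norm_pos_iff.mpr hv
  have hlam₀ : 0 ≤ lam := nonneg_of_mul_nonneg_left ((norm_nonneg w).trans hw) hv₀
  have hinner := mul_norm_sq_le_inner_add_of_norm_le hw
  have hnorm : ‖v + w‖ ≤ (1 + lam) * ‖v‖ := by linarith [norm_add_le v w]
  have hinner_pos : 0 < ⟪v, v + w⟫ := by nlinarith [pow_pos hv₀ 2]
  have hsum₀ : 0 < ‖v + w‖ := norm_pos_iff.mpr fun h => by simp [h] at hinner_pos
  rw [le_div_iff₀ (by positivity)]
  calc (1 - lam) / (1 + lam) * (‖v‖ * ‖v + w‖)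
      ≤ (1 - lam) / (1 + lam) * (‖v‖ * ((1 + lam) * ‖v‖)) := by
        have : 0 ≤ (1 - lam) / (1 + lam) := div_nonneg (by linarith) (by linarith)
        gcongr
    _ = (1 - lam) * ‖v‖ ^ 2 := by field_simp
    _ ≤ ⟪v, v + w⟫ := hinner

end Perturbation

theorem inner_residual_lower {D : ℕ}
    (R : EuclideanSpace ℝ (Fin D) →L[ℝ] EuclideanSpace ℝ (Fin D))
    (lam : ℝ) (hR : ‖R‖ ≤ lam) (v : EuclideanSpace ℝ (Fin D)) :
    (1 - lam) * ‖v‖ ^ 2 ≤ ⟪v, v + relu (R v)⟫ ∧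
    (lam < 1 → v ≠ 0 → (1 - lam) / (1 + lam) ≤ cosSim v (v + relu (R v))) := by
  have hw : ‖relu (R v)‖ ≤ lam * ‖v‖ := (norm_relu_le _).trans (R.le_of_opNorm_le hR v)
  exact ⟨mul_norm_sq_le_inner_add_of_norm_le hw,
    fun hlam hv => div_le_inner_div_norm_mul_norm_add hlam hv hw⟩
end
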